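/- Let n(z) = e^{-1/z} z^{-(n+2)} and let the measure μ on ℝⁿ × ℝ⁺ have density e^{-z}. Let φ(x) = max{ ‖x‖_∞, 1_H^∞(x) } where H = { x : x₁ ≤ n+2 } (i.e. φ = ‖·‖_C on H and +∞ off H, with C = [-1,1]ⁿ). Then ∫_{ℝⁿ} e^{-φ} = 2ⁿ ∫_0^{n+2} zⁿ e^{-z} dz + 2^{n-1} ∫_{n+2}^∞ (n+2+z) z^{n-1} e^{-z} dz = 2ⁿ n! (1 - R(n)) where R(n) = (1/n!) ∫_{n+2}^∞ ((z-(n+2))/2) z^{n-1} e^{-z} dz. -/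

import Mathlib

/-!
Layer cake: `∫ e^{-φ} = ∫_0^∞ vol {φ < z} e^{-z} dz`, and `{φ < z}` is the box
`{‖x‖_∞ < z, x₁ ≤ n+2}` with sides `min(z, n+2) + z` and `2z` (`n-1` times). Splitting the
`z`-integral at `n+2` gives the first formula; for the second write `n+2+z = 2z - (z-(n+2))`
and use `∫_0^∞ zⁿ e^{-z} dz = n!`.
-/

open MeasureTheory ENNReal Set

noncomputable def expNeg (t : ℝ≥0∞) : ℝ≥0∞ :=
  if t = ∞ then 0 else ENNReal.ofReal (Real.exp (-t.toReal))

noncomputable def Rfun (n : ℕ) : ℝ :=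
  (1 / (n.factorial : ℝ)) *
    ∫ z in Ioi ((n : ℝ) + 2), ((z - ((n : ℝ) + 2)) / 2) * z ^ (n - 1) * Real.exp (-z)

open Real

lemma integrableOn_pow_mul_exp_neg_Ioi (k : ℕ) (a : ℝ) :
    IntegrableOn (fun z : ℝ => z ^ k * exp (-z)) (Ioi a) := by
  have hcont : Continuous fun z : ℝ => z ^ k * exp (-z) := by fun_prop
  have hpos : IntegrableOn (fun z : ℝ => z ^ k * exp (-z)) (Ioi 0) := by
    refine (GammaIntegral_convergent (s := k + 1) (by positivity)).congr_fun
      (fun z _ => ?_) measurableSet_Ioi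
    simp [mul_comm]
  exact ((hcont.integrableOn_Icc.mono_set Ioc_subset_Icc_self).union hpos).mono_set
    Ioi_subset_Ioc_union_Ioi

lemma integral_pow_mul_exp_neg_Ioi_zero (k : ℕ) :
    ∫ z in Ioi (0 : ℝ), z ^ k * exp (-z) = k.factorial := by
  rw [← Gamma_nat_eq_factorial, Gamma_eq_integral (by positivity)]
  refine setIntegral_congr_fun measurableSet_Ioi fun z _ => ?_
  simp [mul_comm]

lemma integral_Ioo_add_integral_Ioi_pow_mul_exp_neg (k : ℕ) {c : ℝ} (hc : 0 ≤ c) :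
    (∫ z in Ioo 0 c, z ^ k * exp (-z)) + ∫ z in Ioi c, z ^ k * exp (-z) = k.factorial := by
  have hcont : Continuous fun z : ℝ => z ^ k * exp (-z) := by fun_prop
  rw [← integral_pow_mul_exp_neg_Ioi_zero, ← Ioc_union_Ioi_eq_Ioi hc,
    setIntegral_union (Ioc_disjoint_Ioi le_rfl) measurableSet_Ioi
      (hcont.integrableOn_Icc.mono_set Ioc_subset_Icc_self)
      (integrableOn_pow_mul_exp_neg_Ioi k c), integral_Ioc_eq_integral_Ioo]

lemma ofReal_exp_neg_eq_setLIntegral_Ioi (a : ℝ) :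
    ENNReal.ofReal (exp (-a)) = ∫⁻ z in Ioi a, ENNReal.ofReal (exp (-z)) := by
  have hint : IntegrableOn (fun z => exp (-z)) (Ioi a) := by
    simpa using exp_neg_integrableOn_Ioi a one_pos
  rw [← ofReal_integral_eq_lintegral_ofReal hint
    (ae_of_all _ fun z => (exp_pos _).le), integral_exp_neg_Ioi]

theorem lintegral_ofReal_exp_neg_eq_lintegral_measure_lt {α : Type*} [MeasurableSpace α]
    (μ : Measure α) [SFinite μ] {f : α → ℝ} (hf : Measurable f) :
    ∫⁻ x, ENNReal.ofReal (exp (-f x)) ∂μ =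
      ∫⁻ z, μ {x | f x < z} * ENNReal.ofReal (exp (-z)) := by
  set g : ℝ → ℝ≥0∞ := fun z => ENNReal.ofReal (exp (-z))
  have hg : Measurable g := by fun_prop
  have hmeas : AEMeasurable (Function.uncurry fun (x : α) (z : ℝ) => (Ioi (f x)).indicator g z)
      (μ.prod volume) :=
    ((hg.comp measurable_snd).indicator
      (measurableSet_lt (hf.comp measurable_fst) measurable_snd)).aemeasurable
  calc ∫⁻ x, g (f x) ∂μ = ∫⁻ x, (∫⁻ z, (Ioi (f x)).indicator g z) ∂μ := by
        simp_rw [lintegral_indicator measurableSet_Ioi]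
        exact lintegral_congr fun x => ofReal_exp_neg_eq_setLIntegral_Ioi (f x)
    _ = ∫⁻ z, ∫⁻ x, {x | f x < z}.indicator (fun _ => g z) x ∂μ :=
        lintegral_lintegral_swap hmeas
    _ = ∫⁻ z, μ {x | f x < z} * g z := by
        simp_rw [lintegral_indicator_const (measurableSet_lt hf measurable_const), mul_comm]

lemma volume_Ioo_inter_Iic (z c : ℝ) :
    volume (Ioo (-z) z ∩ Iic c) = ENNReal.ofReal (min z c + z) := by
  rw [← measure_congr ((ae_eq_refl (Ioo (-z) z)).inter Iio_ae_eq_Iic), Ioo_inter_Iio,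
    Real.volume_Ioo, sub_neg_eq_add]

lemma volume_setOf_norm_lt_and_apply_zero_le (m : ℕ) {z : ℝ} (hz : 0 < z) (c : ℝ) :
    volume {x : Fin (m + 1) → ℝ | ‖x‖ < z ∧ x 0 ≤ c} =
      ENNReal.ofReal ((min z c + z) * (2 * z) ^ m) := by
  have hbox : {x : Fin (m + 1) → ℝ | ‖x‖ < z ∧ x 0 ≤ c} =
      univ.pi (Fin.cons (Ioo (-z) z ∩ Iic c) fun _ => Ioo (-z) z) := by
    ext x
    simp only [mem_ofPred_eq, pi_norm_lt_iff hz, Real.norm_eq_abs, abs_lt, mem_univ_pi,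
      Fin.forall_fin_succ, Fin.cons_zero, Fin.cons_succ, mem_inter_iff, mem_Ioo, mem_Iic]
    tauto
  rw [hbox, volume_pi_pi, Fin.prod_univ_succ, Fin.cons_zero]
  simp only [Fin.cons_succ, Finset.prod_const, Finset.card_univ, Fintype.card_fin,
    volume_Ioo_inter_Iic, Real.volume_Ioo, sub_neg_eq_add, two_mul]
  rw [ENNReal.ofReal_mul' (by positivity), ENNReal.ofReal_pow (by positivity)]

lemma integrableOn_affine_mul_pow_mul_exp_neg_Ioi {p : ℝ → ℝ} (a b : ℝ)
    (hp : ∀ z, p z = a * z + b) (m : ℕ) (c : ℝ) :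
    IntegrableOn (fun z => p z * z ^ m * exp (-z)) (Ioi c) := by
  have hsplit : (fun z => p z * z ^ m * exp (-z)) =
      fun z => a * (z ^ (m + 1) * exp (-z)) + b * (z ^ m * exp (-z)) := by
    ext z; rw [hp]; ring
  rw [hsplit]
  exact ((integrableOn_pow_mul_exp_neg_Ioi (m + 1) c).const_mul a).add
    ((integrableOn_pow_mul_exp_neg_Ioi m c).const_mul b)

lemma integral_affine_mul_pow_mul_exp_neg_Ioi {p : ℝ → ℝ} (a b : ℝ)
    (hp : ∀ z, p z = a * z + b) (m : ℕ) (c : ℝ) :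
    ∫ z in Ioi c, p z * z ^ m * exp (-z) =
      a * (∫ z in Ioi c, z ^ (m + 1) * exp (-z)) + b * ∫ z in Ioi c, z ^ m * exp (-z) := by
  have hsplit : ∀ z, p z * z ^ m * exp (-z) =
      a * (z ^ (m + 1) * exp (-z)) + b * (z ^ m * exp (-z)) := fun z => by rw [hp]; ring
  simp_rw [hsplit]
  rw [integral_add ((integrableOn_pow_mul_exp_neg_Ioi (m + 1) c).const_mul a)
    ((integrableOn_pow_mul_exp_neg_Ioi m c).const_mul b), integral_const_mul, integral_const_mul]

lemma lintegral_exp_neg_norm_halfspace (m : ℕ) (c : ℝ) :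
    ∫⁻ x in {x : Fin (m + 1) → ℝ | x 0 ≤ c}, ENNReal.ofReal (exp (-‖x‖)) =
      ∫⁻ z in Ioi 0, ENNReal.ofReal ((min z c + z) * (2 * z) ^ m * exp (-z)) := by
  set F : ℝ → ℝ≥0∞ := fun z =>
    volume {x : Fin (m + 1) → ℝ | ‖x‖ < z ∧ x 0 ≤ c} * ENNReal.ofReal (exp (-z))
  have hlayer : ∫⁻ x in {x : Fin (m + 1) → ℝ | x 0 ≤ c}, ENNReal.ofReal (exp (-‖x‖)) =
      ∫⁻ z, F z := by
    rw [lintegral_ofReal_exp_neg_eq_lintegral_measure_lt _ continuous_norm.measurable]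
    simp_rw [Measure.restrict_apply (measurableSet_lt measurable_norm measurable_const)]
    rfl
  have hnonpos : EqOn F 0 (Ioi 0)ᶜ := fun z hz => by
    have hz : z ≤ 0 := by simpa using hz
    have hnorm : ∀ x : Fin (m + 1) → ℝ, ¬ ‖x‖ < z := fun x =>
      not_lt.2 (hz.trans (norm_nonneg x))
    simp [F, hnorm]
  have hpos : EqOn F (fun z => ENNReal.ofReal ((min z c + z) * (2 * z) ^ m * exp (-z)))
      (Ioi 0) := fun z hz => by
    dsimp only [F]
    rw [volume_setOf_norm_lt_and_apply_zero_le m hz c, ← ENNReal.ofReal_mul' (exp_pos _).le]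
  rw [hlayer, ← lintegral_add_compl F measurableSet_Ioi,
    setLIntegral_congr_fun measurableSet_Ioi.compl hnonpos, Pi.zero_def, lintegral_zero,
    add_zero, setLIntegral_congr_fun measurableSet_Ioi hpos]

lemma lintegral_box_volume_mul_exp_neg (m : ℕ) {c : ℝ} (hc : 0 < c) :
    ∫⁻ z in Ioi 0, ENNReal.ofReal ((min z c + z) * (2 * z) ^ m * exp (-z)) =
      ENNReal.ofReal (2 ^ (m + 1) * ∫ z in Ioo 0 c, z ^ (m + 1) * exp (-z)) +
        ENNReal.ofReal (2 ^ m * ∫ z in Ioi c, (c + z) * z ^ m * exp (-z)) := by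
  have hsmall : EqOn (fun z => (min z c + z) * (2 * z) ^ m * exp (-z))
      (fun z => 2 ^ (m + 1) * (z ^ (m + 1) * exp (-z))) (Ioo 0 c) := fun z hz => by
    beta_reduce
    rw [min_eq_left hz.2.le]
    ring
  have hlarge : EqOn (fun z => (min z c + z) * (2 * z) ^ m * exp (-z))
      (fun z => 2 ^ m * ((c + z) * z ^ m * exp (-z))) (Ioi c) := fun z hz => by
    beta_reduce
    rw [min_eq_right hz.le]
    ring
  have hint_small : IntegrableOn (fun z : ℝ => z ^ (m + 1) * exp (-z)) (Ioo 0 c) :=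
    (integrableOn_pow_mul_exp_neg_Ioi (m + 1) 0).mono_set Ioo_subset_Ioi_self
  have hint_large := integrableOn_affine_mul_pow_mul_exp_neg_Ioi (p := fun z => c + z) 1 c
    (fun z => by ring) m c
  rw [← Ioc_union_Ioi_eq_Ioi hc.le, lintegral_union measurableSet_Ioi (Ioc_disjoint_Ioi le_rfl),
    setLIntegral_congr Ioo_ae_eq_Ioc.symm, ← integral_const_mul, ← integral_const_mul,
    setLIntegral_congr_fun measurableSet_Ioo fun z hz => congrArg ENNReal.ofReal (hsmall hz),
    setLIntegral_congr_fun measurableSet_Ioi fun z hz => congrArg ENNReal.ofReal (hlarge hz),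
    ofReal_integral_eq_lintegral_ofReal (hint_small.const_mul _)
      ((ae_restrict_iff' measurableSet_Ioo).2 (ae_of_all _ fun z hz => by
        have := hz.1; positivity)),
    ofReal_integral_eq_lintegral_ofReal (hint_large.const_mul _)
      ((ae_restrict_iff' measurableSet_Ioi).2 (ae_of_all _ fun z hz => by
        have := hc.trans hz; positivity))]

lemma ofReal_add_ofReal_eq_factorial_mul (m : ℕ) {c : ℝ} (hc : 0 ≤ c) :
    ENNReal.ofReal (2 ^ (m + 1) * ∫ z in Ioo 0 c, z ^ (m + 1) * exp (-z)) +
        ENNReal.ofReal (2 ^ m * ∫ z in Ioi c, (c + z) * z ^ m * exp (-z)) =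
      ENNReal.ofReal (2 ^ (m + 1) * (m + 1).factorial *
        (1 - 1 / (m + 1).factorial * ∫ z in Ioi c, ((z - c) / 2) * z ^ m * exp (-z))) := by
  have hsmall : 0 ≤ ∫ z in Ioo 0 c, z ^ (m + 1) * exp (-z) :=
    setIntegral_nonneg measurableSet_Ioo fun z hz => by have := hz.1; positivity
  have hlarge : 0 ≤ ∫ z in Ioi c, (c + z) * z ^ m * exp (-z) :=
    setIntegral_nonneg measurableSet_Ioi fun z hz => by
      have : 0 < z := hc.trans_lt hz
      positivity
  have hgamma := integral_Ioo_add_integral_Ioi_pow_mul_exp_neg (m + 1) hc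
  rw [integral_affine_mul_pow_mul_exp_neg_Ioi (p := fun z => c + z) 1 c (fun z => by ring)]
    at hlarge ⊢
  rw [integral_affine_mul_pow_mul_exp_neg_Ioi (p := fun z => (z - c) / 2) (1 / 2) (-c / 2)
    (fun z => by ring), ← ENNReal.ofReal_add (by positivity) (by positivity)]
  have hfact : ((m + 1).factorial : ℝ) ≠ 0 := by positivity
  congr 1
  field_simp
  linear_combination (2 : ℝ) ^ m * 4 * hgamma

-- On `Fin n → ℝ`, `‖·‖` is the sup norm, i.e. the gauge `‖·‖_C` of `C = [-1,1]ⁿ`.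
/-- For `φ = max(‖·‖_C, 1_H^∞)` with `C = [-1,1]ⁿ` and `H = {x : x₁ ≤ n+2}`,
`∫ e^{-φ} = 2ⁿ ∫_0^{n+2} zⁿ e^{-z} dz + 2^{n-1} ∫_{n+2}^∞ (n+2+z) z^{n-1} e^{-z} dz
          = 2ⁿ n! (1 - R(n))`.
(The sup norm on `Fin n → ℝ` is the gauge of the cube `C`.) -/
theorem vol_phi_eq (n : ℕ) (hn : 0 < n) (φ : (Fin n → ℝ) → ℝ≥0∞)
    (hφ : ∀ x, φ x = if x ⟨0, hn⟩ ≤ (n : ℝ) + 2 then ENNReal.ofReal ‖x‖ else ∞) :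
    (∫⁻ x, expNeg (φ x)) =
        ENNReal.ofReal ((2 : ℝ) ^ n * ∫ z in Ioo (0 : ℝ) ((n : ℝ) + 2), z ^ n * Real.exp (-z))
          + ENNReal.ofReal ((2 : ℝ) ^ (n - 1) *
              ∫ z in Ioi ((n : ℝ) + 2), ((n : ℝ) + 2 + z) * z ^ (n - 1) * Real.exp (-z)) ∧
      (∫⁻ x, expNeg (φ x)) =
        ENNReal.ofReal ((2 : ℝ) ^ n * (n.factorial : ℝ) * (1 - Rfun n)) := by
  obtain ⟨m, rfl⟩ : ∃ m, n = m + 1 := ⟨n - 1, (Nat.succ_pred_eq_of_pos hn).symm⟩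
  have hc : (0 : ℝ) < ((m + 1 : ℕ) : ℝ) + 2 := by positivity
  have hexp : ∀ x, expNeg (φ x) =
      {x : Fin (m + 1) → ℝ | x 0 ≤ ((m + 1 : ℕ) : ℝ) + 2}.indicator
        (fun x => ENNReal.ofReal (exp (-‖x‖))) x := by
    intro x
    rw [hφ, Fin.zero_eta, indicator_apply]
    simp only [mem_ofPred_eq]
    split_ifs
    · rw [expNeg, if_neg ofReal_ne_top, toReal_ofReal (norm_nonneg x)]
    · rw [expNeg, if_pos rfl]
  rw [lintegral_congr hexp,
    lintegral_indicator (measurableSet_le (measurable_pi_apply 0) measurable_const),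
    lintegral_exp_neg_norm_halfspace, lintegral_box_volume_mul_exp_neg m hc, Rfun,
    Nat.add_sub_cancel]
  exact ⟨rfl, ofReal_add_ofReal_eq_factorial_mul m hc.le⟩
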